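/- For every play of Morpion Solitaire 5D of length N, the total potential of the board after move N equals exactly 144 − N. In particular, the total potential of the initial board (N = 0) is 144, and the total potential decreases by exactly 1 with every move. -/

import Mathlib

/-- The four directions of Morpion Solitaire. -/
def Dir : Set (ℤ × ℤ) := {(1, 0), (0, 1), (1, 1), (1, -1)}

/-- The line (segment) of length 5 starting at `q` in direction `d`:
the set `{q + t • d : t ∈ {0,1,2,3,4}}`. -/
def seg (q d : ℤ × ℤ) : Set (ℤ × ℤ) := {p | ∃ t : ℕ, t ≤ 4 ∧ p = q + (t : ℤ) • d}

/-- The initial configuration of 36 crosses. -/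
def S0 : Set (ℤ × ℤ) := {p |
  ((p.2 = 0 ∨ p.2 = 9) ∧ 3 ≤ p.1 ∧ p.1 ≤ 6) ∨
  ((p.1 = 0 ∨ p.1 = 9) ∧ 3 ≤ p.2 ∧ p.2 ≤ 6) ∨
  ((p.1 = 3 ∨ p.1 = 6) ∧ ((0 ≤ p.2 ∧ p.2 ≤ 3) ∨ (6 ≤ p.2 ∧ p.2 ≤ 9))) ∨
  ((p.2 = 3 ∨ p.2 = 6) ∧ ((0 ≤ p.1 ∧ p.1 ≤ 3) ∨ (6 ≤ p.1 ∧ p.1 ≤ 9)))}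

/-- A play of Morpion Solitaire 5D of length `N`: crosses `p i`, and lines
`seg (q i) (d i)` in directions `d i ∈ Dir`, subject to the rules of 5D.
(Index `i : Fin N` corresponds to move `i + 1`.) -/
structure Play (N : ℕ) where
  p : Fin N → ℤ × ℤ
  q : Fin N → ℤ × ℤ
  d : Fin N → ℤ × ℤ
  d_mem : ∀ i, d i ∈ Dir
  /-- rule (1): the new cross is placed on an empty point -/
  p_not_S0 : ∀ i, p i ∉ S0
  p_new : ∀ i j : Fin N, j < i → p j ≠ p i
  /-- rule (2): the new line passes through the new cross -/
  p_mem : ∀ i, p i ∈ seg (q i) (d i)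
  /-- rule (3): the new line passes only through existing crosses -/
  seg_sub : ∀ i, seg (q i) (d i) ⊆ S0 ∪ {x | ∃ j : Fin N, j ≤ i ∧ p j = x}
  /-- rule (4): two lines in the same direction are disjoint -/
  disj : ∀ i j : Fin N, j < i → d j = d i → seg (q i) (d i) ∩ seg (q j) (d j) = ∅

/-- The set of crosses on the board after the first `n` moves of a play. -/
def crossesUpTo {N : ℕ} (P : Play N) (n : ℕ) : Set (ℤ × ℤ) :=
  S0 ∪ {x | ∃ i : Fin N, (i : ℕ) < n ∧ P.p i = x}

/-- The potential of a cross `C` after the first `n` moves of a play: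
`4` minus the number of the first `n` lines that cover `C`. -/
noncomputable def potUpTo {N : ℕ} (P : Play N) (n : ℕ) (C : ℤ × ℤ) : ℤ :=
  4 - (Nat.card {i : Fin N // (i : ℕ) < n ∧ C ∈ seg (P.q i) (P.d i)} : ℤ)

/-- The total potential of the board after the first `n` moves of a play:
the sum of the potentials of all crosses on the board. -/
noncomputable def totalPotUpTo {N : ℕ} (P : Play N) (n : ℕ) : ℤ :=
  ∑ᶠ C ∈ crossesUpTo P n, potUpTo P n C

/-!
Count the potential with multiplicity. After `n` moves the board holds `36 + n` distinct crosses,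
each starting with potential `4`, and each of the `n` lines lowers the potential of each of its
five points by one. All five points of every line are already on the board, so the total is
`4 (36 + n) - 5 n = 144 - n`.
-/

open Finset

theorem Finset.sum_sub_card_filter_mem_eq {α ι : Type*} [DecidableEq α] (F : Finset α)
    (I : Finset ι) (L : ι → Finset α) (hL : ∀ i ∈ I, L i ⊆ F) (k : ℤ) :
    ∑ C ∈ F, (k - #{i ∈ I | C ∈ L i}) = k * #F - ∑ i ∈ I, #(L i) := by
  have double_count : ∑ C ∈ F, #{i ∈ I | C ∈ L i} = ∑ i ∈ I, #(L i) := by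
    refine (sum_card_bipartiteAbove_eq_sum_card_bipartiteBelow (fun C i => C ∈ L i)).trans ?_
    exact sum_congr rfl fun i hi =>
      congrArg card <| filter_mem_eq_inter.trans (inter_eq_right.mpr (hL i hi))
  rw [sum_sub_distrib, sum_const, nsmul_eq_mul, mul_comm]
  exact_mod_cast congrArg (fun m : ℕ => k * #F - m) double_count

noncomputable def segFinset (q d : ℤ × ℤ) : Finset (ℤ × ℤ) :=
  (range 5).image fun t : ℕ => q + (t : ℤ) • d

@[simp]
theorem coe_segFinset (q d : ℤ × ℤ) : (segFinset q d : Set (ℤ × ℤ)) = seg q d := by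
  ext x
  simp only [segFinset, coe_image, coe_range, Set.mem_image, Set.mem_Iio, seg, Set.mem_ofPred_eq,
    eq_comm (b := x), Nat.lt_succ_iff]

theorem card_segFinset (q : ℤ × ℤ) {d : ℤ × ℤ} (hd : d ≠ 0) : #(segFinset q d) = 5 := by
  rw [segFinset, card_image_of_injective _ fun s t hst => ?_, card_range]
  exact Nat.cast_injective (smul_left_injective ℤ hd (add_left_cancel hst))

theorem ne_zero_of_mem_Dir {d : ℤ × ℤ} (hd : d ∈ Dir) : d ≠ 0 := by
  rcases hd with rfl | rfl | rfl | rfl <;> decide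

instance : DecidablePred (· ∈ S0) := fun _ => inferInstanceAs (Decidable (_ ∨ _ ∨ _ ∨ _))

noncomputable def S0Finset : Finset (ℤ × ℤ) := (Icc (0, 0) (9, 9)).filter (· ∈ S0)

theorem coe_S0Finset : (S0Finset : Set (ℤ × ℤ)) = S0 := by
  ext p
  rw [mem_coe, S0Finset, mem_filter, and_iff_right_iff_imp, mem_Icc, Prod.le_def, Prod.le_def]
  intro hp
  simp only [S0, Set.mem_ofPred_eq] at hp
  omega

theorem card_S0Finset : #S0Finset = 36 := by decide

def movesBefore (N n : ℕ) : Finset (Fin N) := {i | (i : ℕ) < n}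

theorem card_movesBefore {N n : ℕ} (hn : n ≤ N) : #(movesBefore N n) = n := by
  rw [movesBefore, Fin.card_filter_val_lt, min_eq_right hn]

namespace Play

variable {N : ℕ} (P : Play N)

noncomputable def line (i : Fin N) : Finset (ℤ × ℤ) := segFinset (P.q i) (P.d i)

theorem card_line (i : Fin N) : #(P.line i) = 5 :=
  card_segFinset _ (ne_zero_of_mem_Dir (P.d_mem i))

theorem p_injective : Function.Injective P.p := by
  intro i j h
  by_contra hne
  rcases lt_or_gt_of_ne hne with hlt | hlt
  · exact P.p_new j i hlt h
  · exact P.p_new i j hlt h.symm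

noncomputable def crosses (n : ℕ) : Finset (ℤ × ℤ) :=
  S0Finset ∪ (movesBefore N n).image P.p

theorem coe_crosses (n : ℕ) : (P.crosses n : Set (ℤ × ℤ)) = crossesUpTo P n := by
  simp [crosses, crossesUpTo, coe_S0Finset, movesBefore, Set.image, eq_comm]

theorem card_crosses {n : ℕ} (hn : n ≤ N) : #(P.crosses n) = 36 + n := by
  have S0_disjoint_moves : Disjoint S0Finset ((movesBefore N n).image P.p) := by
    simp only [disjoint_right, mem_image, ← mem_coe (s := S0Finset), coe_S0Finset]
    rintro _ ⟨i, -, rfl⟩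
    exact P.p_not_S0 i
  rw [crosses, card_union_of_disjoint S0_disjoint_moves, card_S0Finset,
    card_image_of_injective _ P.p_injective, card_movesBefore hn]

theorem line_subset_crosses {n : ℕ} {i : Fin N} (hi : i ∈ movesBefore N n) :
    P.line i ⊆ P.crosses n := by
  intro x hx
  rw [← mem_coe, coe_crosses]
  rw [← mem_coe, line, coe_segFinset] at hx
  rcases P.seg_sub i hx with hS | ⟨j, hji, rfl⟩
  · exact Or.inl hS
  · exact Or.inr ⟨j, lt_of_le_of_lt hji (mem_filter.mp hi).2, rfl⟩

theorem potUpTo_eq (n : ℕ) (C : ℤ × ℤ) :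
    potUpTo P n C = 4 - #{i ∈ movesBefore N n | C ∈ P.line i} := by
  classical
  rw [potUpTo, Nat.card_eq_fintype_card, Fintype.card_subtype, movesBefore, filter_filter]
  simp only [line, ← mem_coe, coe_segFinset]

theorem totalPotUpTo_eq_sum (n : ℕ) :
    totalPotUpTo P n =
      ∑ C ∈ P.crosses n, ((4 : ℤ) - #{i ∈ movesBefore N n | C ∈ P.line i}) := by
  rw [totalPotUpTo, ← coe_crosses, finsum_mem_coe_finset]
  exact sum_congr rfl fun C _ => P.potUpTo_eq n C

end Play

/-- The total potential of the board after a play of length `N` is exactly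
`144 - N`; moreover, after any first `n ≤ N` moves of the play the total
potential is exactly `144 - n` (in particular it is `144` initially and
decreases by exactly `1` with every move). -/
theorem total_potential_eq (N : ℕ) (P : Play N) :
    totalPotUpTo P N = 144 - (N : ℤ) ∧
    ∀ n : ℕ, n ≤ N → totalPotUpTo P n = 144 - (n : ℤ) := by
  have potential_after : ∀ n ≤ N, totalPotUpTo P n = 144 - (n : ℤ) := fun n hn => by
    rw [P.totalPotUpTo_eq_sum,
      sum_sub_card_filter_mem_eq _ _ _ fun i hi => P.line_subset_crosses hi, P.card_crosses hn,
      sum_congr rfl fun i _ => P.card_line i, sum_const, card_movesBefore hn, smul_eq_mul]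
    push_cast
    ring
  exact ⟨potential_after N le_rfl, potential_after⟩
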